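/- arXiv:1511.05781 — 4 statements merged into one kernel-verified Lean document; each statement's English description precedes it below -/
import Mathlib

section
/- Let B > 0, Bb₀ > 0, Bb₁ > 0 with b₀ + b₁ = 1. The functions f₁(t) = e^{-t}(1 + b₁(e^{-2Bt} - 1)/(1 + 2Bb₀)), f₂(t) = e^{-t}(1 + b₀(e^{-2Bt} - 1)/(1 + 2Bb₁)), f₃(t) = e^{-t}(1 - (e^{-2Bt} - 1)/(2B)) solve the linear ODE system f₁' = (4B²b₁b₀/(1+2Bb₀))f₃ - (1+2Bb₁)f₁, f₂' = (4B²b₁b₀/(1+2Bb₁))f₃ - (1+2Bb₀)f₂, f₃' = ((1+2Bb₀)/2)f₁ + ((1+2Bb₁)/2)f₂ - (1+B)f₃, with f₁(0) = f₂(0) = f₃(0) = 1. -/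
open Real

/-!
Each of the three functions has the shape `e^{-t} (1 + c (e^{-2Bt} - 1))`, i.e. it is a
combination `(1 - c) e^{-t} + c e^{-(1+2B)t}` of the two exponential modes of the system, with
`c = b₁/(1+2Bb₀)`, `b₀/(1+2Bb₁)` and `-1/(2B)` respectively. Differentiating this one profile
once reduces the system to three rational identities in `B` and `b₀`, after eliminating
`b₁ = 1 - b₀`.
-/

noncomputable def tailProfile (k c t : ℝ) : ℝ :=
  exp (-t) * (1 + c * (exp (k * t) - 1))

@[simp]
lemma tailProfile_zero (k c : ℝ) : tailProfile k c 0 = 1 := by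
  simp [tailProfile]

lemma hasDerivAt_tailProfile (k c t : ℝ) :
    HasDerivAt (tailProfile k c) (-tailProfile k c t + c * k * exp (-t) * exp (k * t)) t := by
  have hdecay : HasDerivAt (fun t => exp (-t)) (-exp (-t)) t := by
    simpa using (hasDerivAt_neg t).exp
  have hmode : HasDerivAt (fun t => exp (k * t)) (k * exp (k * t)) t := by
    simpa [mul_comm] using ((hasDerivAt_id t).const_mul k).exp
  refine (hdecay.mul (((hmode.sub_const 1).const_mul c).const_add 1)).congr_deriv ?_
  rw [tailProfile]
  ring

/-- The explicit conditional tail functions of the neutral two-type model solve the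
linear ODE system of the backward process, with initial values `1`. -/
theorem neutral_ODE_system (B b₀ b₁ : ℝ) (hB : 0 < B) (hb₀ : 0 < b₀) (hb₁ : 0 < b₁)
    (hsum : b₀ + b₁ = 1) (f₁ f₂ f₃ : ℝ → ℝ)
    (hf₁ : ∀ t, f₁ t =
      Real.exp (-t) * (1 + b₁ * (Real.exp (-2 * B * t) - 1) / (1 + 2 * B * b₀)))
    (hf₂ : ∀ t, f₂ t =
      Real.exp (-t) * (1 + b₀ * (Real.exp (-2 * B * t) - 1) / (1 + 2 * B * b₁)))
    (hf₃ : ∀ t, f₃ t =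
      Real.exp (-t) * (1 - (Real.exp (-2 * B * t) - 1) / (2 * B))) :
    f₁ 0 = 1 ∧ f₂ 0 = 1 ∧ f₃ 0 = 1 ∧
      (∀ t, HasDerivAt f₁
        (4 * B ^ 2 * b₁ * b₀ / (1 + 2 * B * b₀) * f₃ t - (1 + 2 * B * b₁) * f₁ t) t) ∧
      (∀ t, HasDerivAt f₂
        (4 * B ^ 2 * b₁ * b₀ / (1 + 2 * B * b₁) * f₃ t - (1 + 2 * B * b₀) * f₂ t) t) ∧
      (∀ t, HasDerivAt f₃
        ((1 + 2 * B * b₀) / 2 * f₁ t + (1 + 2 * B * b₁) / 2 * f₂ t - (1 + B) * f₃ t) t) := by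
  have hD₀ : 1 + 2 * B * b₀ ≠ 0 := by positivity
  have hD₁ : 1 + 2 * B * b₁ ≠ 0 := by positivity
  have hB' : B ≠ 0 := hB.ne'
  obtain rfl : f₁ = tailProfile (-2 * B) (b₁ / (1 + 2 * B * b₀)) :=
    funext fun t => by rw [hf₁, tailProfile]; ring
  obtain rfl : f₂ = tailProfile (-2 * B) (b₀ / (1 + 2 * B * b₁)) :=
    funext fun t => by rw [hf₂, tailProfile]; ring
  obtain rfl : f₃ = tailProfile (-2 * B) (-1 / (2 * B)) :=
    funext fun t => by rw [hf₃, tailProfile]; ring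
  obtain rfl : b₁ = 1 - b₀ := by linarith
  refine ⟨tailProfile_zero _ _, tailProfile_zero _ _, tailProfile_zero _ _,
    fun t => ?_, fun t => ?_, fun t => ?_⟩ <;>
  refine (hasDerivAt_tailProfile _ _ t).congr_deriv ?_ <;>
  simp only [tailProfile] <;> field_simp <;> ring
end

section
/- Let B > 0 and b₀, b₁ ∈ (0,1) with b₀ + b₁ = 1, and define f₁(t) = e^{-t}(1 + b₁(e^{-2Bt}-1)/(1+2Bb₀)) and f₂(t) = e^{-t}(1 + b₀(e^{-2Bt}-1)/(1+2Bb₁)). Then f₁(t) < f₂(t) for all t > 0 if and only if b₁ > b₀. -/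
open Real

/-- The conditioned genealogical distance given both sampled individuals have type 0
is stochastically smaller than given both have type 1 iff the mutation rate toward
type 1 exceeds the one toward type 0. -/
theorem conditioned_tail_comparison (B b₀ b₁ : ℝ) (hB : 0 < B) (hb₀ : 0 < b₀)
    (hb₁ : 0 < b₁) (hsum : b₀ + b₁ = 1) (f₁ f₂ : ℝ → ℝ)
    (hf₁ : ∀ t, f₁ t =
      Real.exp (-t) * (1 + b₁ * (Real.exp (-2 * B * t) - 1) / (1 + 2 * B * b₀)))
    (hf₂ : ∀ t, f₂ t =
      Real.exp (-t) * (1 + b₀ * (Real.exp (-2 * B * t) - 1) / (1 + 2 * B * b₁))) :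
    (∀ t > 0, f₁ t < f₂ t) ↔ b₁ > b₀ := by
  have hD₀ : (0:ℝ) < 1 + 2 * B * b₀ := by positivity
  have hD₁ : (0:ℝ) < 1 + 2 * B * b₁ := by positivity
  constructor
  · intro h
    by_contra hle
    push_neg at hle
    have h1 := h 1 one_pos
    rw [hf₁, hf₂, mul_lt_mul_iff_right₀ (Real.exp_pos _), add_lt_add_iff_left,
      div_lt_div_iff₀ hD₀ hD₁] at h1
    have he : Real.exp (-2 * B * 1) < 1 := by
      rw [Real.exp_lt_one_iff]; nlinarith
    nlinarith [mul_nonneg (sub_nonneg.2 hle) (sub_pos.2 he).le,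
      mul_nonneg (mul_nonneg (sub_nonneg.2 hle) (sub_pos.2 he).le) hB.le]
  · intro hgt t ht
    rw [hf₁, hf₂, mul_lt_mul_iff_right₀ (Real.exp_pos _), add_lt_add_iff_left,
      div_lt_div_iff₀ hD₀ hD₁]
    have he : Real.exp (-2 * B * t) < 1 := by
      rw [Real.exp_lt_one_iff]; nlinarith
    nlinarith [mul_pos (sub_pos.2 hgt) (sub_pos.2 he),
      mul_pos (mul_pos (sub_pos.2 hgt) (sub_pos.2 he)) hB]
end

section
/- Let B > 0 and b₀, b₁ ∈ (0,1) with b₀ + b₁ = 1. With f₁, f₂ as above and f₃(t) = e^{-t}(1 - (e^{-2Bt}-1)/(2B)), one has max{f₁(t), f₂(t)} < e^{-t} < f₃(t) for all t > 0. -/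
open Real

/-- Neutral two-type case: the conditioned genealogical distance is stochastically
smaller than the unconditioned (exponential) one iff the two given types coincide,
and stochastically larger if they differ. -/
theorem conditioned_vs_unconditioned (B b₀ b₁ : ℝ) (hB : 0 < B) (hb₀ : 0 < b₀)
    (hb₁ : 0 < b₁) (hsum : b₀ + b₁ = 1) (f₁ f₂ f₃ : ℝ → ℝ)
    (hf₁ : ∀ t, f₁ t =
      Real.exp (-t) * (1 + b₁ * (Real.exp (-2 * B * t) - 1) / (1 + 2 * B * b₀)))
    (hf₂ : ∀ t, f₂ t =
      Real.exp (-t) * (1 + b₀ * (Real.exp (-2 * B * t) - 1) / (1 + 2 * B * b₁)))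
    (hf₃ : ∀ t, f₃ t =
      Real.exp (-t) * (1 - (Real.exp (-2 * B * t) - 1) / (2 * B))) :
    ∀ t > 0, max (f₁ t) (f₂ t) < Real.exp (-t) ∧ Real.exp (-t) < f₃ t := by
  intro t ht
  have hE : Real.exp (-2 * B * t) - 1 < 0 := by
    have : Real.exp (-2 * B * t) < 1 := by
      rw [Real.exp_lt_one_iff]; nlinarith
    linarith
  have hexp : 0 < Real.exp (-t) := Real.exp_pos _
  have h1 : f₁ t < Real.exp (-t) := by
    rw [hf₁ t]
    have hd : b₁ * (Real.exp (-2 * B * t) - 1) / (1 + 2 * B * b₀) < 0 :=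
      div_neg_of_neg_of_pos (by nlinarith) (by nlinarith)
    nlinarith
  have h2 : f₂ t < Real.exp (-t) := by
    rw [hf₂ t]
    have hd : b₀ * (Real.exp (-2 * B * t) - 1) / (1 + 2 * B * b₁) < 0 :=
      div_neg_of_neg_of_pos (by nlinarith) (by nlinarith)
    nlinarith
  have h3 : Real.exp (-t) < f₃ t := by
    rw [hf₃ t]
    have hd : (Real.exp (-2 * B * t) - 1) / (2 * B) < 0 :=
      div_neg_of_neg_of_pos hE (by linarith)
    nlinarith
  exact ⟨max_lt h1 h2, h3⟩
end

section
/- Let π be a probability measure on [0,1] that is stationary for the Wright-Fisher generator L̂f(z) = [Bb₁(1-z) - Bb₀z + Sz(1-z)]f'(z) + (1/2)z(1-z)f''(z) (i.e. ∫ L̂f dπ = 0 for all f ∈ C²([0,1])), and write E[0^m] = ∫(1-z)^m dπ. Then for every n ≥ 0: (n+1+2B+2S)·E[0^{n+2}] = (n+1+2Bb₀)·E[0^{n+1}] + 2S·E[0^{n+3}], where B = Bb₀ + Bb₁. -/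
open MeasureTheory

/-! With `y = 1 - z` and `b₁ = 1 - b₀`, the generator applied to `f = y ^ (n + 2)` is the
polynomial `(n + 2) / 2 * ((n + 1 + 2Bb₀) y^(n+1) + 2S y^(n+3) - (n + 1 + 2B + 2S) y^(n+2))`:
the drift contributes `-(n + 2) y^(n+1) (B y - B b₀ + S y (1 - y))` and the diffusion
`(n + 2)(n + 1)/2 · (1 - y) y^(n+1)`. Integrating against the stationary `μ`, which is
carried by `[0, 1]` so that all moments are finite, gives the recursion. -/

theorem ContinuousOn.integrable_of_measure_compl_eq_zero {X E : Type*} [MeasurableSpace X]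
    [TopologicalSpace X] [OpensMeasurableSpace X] [T2Space X] [NormedAddCommGroup E]
    {μ : Measure X} [IsFiniteMeasureOnCompacts μ] {K : Set X} {f : X → E}
    (hK : IsCompact K) (hμ : μ Kᶜ = 0) (hf : ContinuousOn f K) : Integrable f μ := by
  rw [← Measure.restrict_eq_self_of_ae_mem (mem_ae_iff.2 hμ)]
  exact hf.integrableOn_compact hK

theorem hasDerivAt_one_sub_pow_succ (k : ℕ) (z : ℝ) :
    HasDerivAt (fun z : ℝ => (1 - z) ^ (k + 1)) (-((k : ℝ) + 1) * (1 - z) ^ k) z := by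
  refine (((hasDerivAt_id' z).const_sub 1).fun_pow (k + 1)).congr_deriv ?_
  push_cast
  ring

theorem deriv_one_sub_pow_succ (k : ℕ) :
    deriv (fun z : ℝ => (1 - z) ^ (k + 1)) = fun z => -((k : ℝ) + 1) * (1 - z) ^ k :=
  funext fun z => (hasDerivAt_one_sub_pow_succ k z).deriv

theorem deriv_deriv_one_sub_pow (k : ℕ) :
    deriv (deriv fun z : ℝ => (1 - z) ^ (k + 2))
      = fun z => ((k : ℝ) + 2) * ((k : ℝ) + 1) * (1 - z) ^ k := by
  rw [deriv_one_sub_pow_succ]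
  funext z
  rw [((hasDerivAt_one_sub_pow_succ k z).const_mul _).deriv]
  push_cast
  ring

noncomputable def wfGenerator (B b₀ b₁ S : ℝ) (f : ℝ → ℝ) (z : ℝ) : ℝ :=
  (B * b₁ * (1 - z) - B * b₀ * z + S * z * (1 - z)) * deriv f z
    + 1 / 2 * (z * (1 - z)) * deriv (deriv f) z

theorem wfGenerator_one_sub_pow {B b₀ b₁ S : ℝ} (hsum : b₀ + b₁ = 1) (n : ℕ) (z : ℝ) :
    wfGenerator B b₀ b₁ S (fun z => (1 - z) ^ (n + 2)) z
      = ((n : ℝ) + 2) / 2 * (((n : ℝ) + 1 + 2 * B * b₀) * (1 - z) ^ (n + 1)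
        + 2 * S * (1 - z) ^ (n + 3) - ((n : ℝ) + 1 + 2 * B + 2 * S) * (1 - z) ^ (n + 2)) := by
  obtain rfl : b₁ = 1 - b₀ := by linarith
  rw [wfGenerator, deriv_deriv_one_sub_pow, deriv_one_sub_pow_succ]
  push_cast
  ring

theorem WF_moment_recursion_one_general (B b₀ b₁ S : ℝ) (hsum : b₀ + b₁ = 1)
    (μ : Measure ℝ) [IsProbabilityMeasure μ] (hsupp : μ (Set.Icc (0 : ℝ) 1)ᶜ = 0)
    (hstat : ∀ f : ℝ → ℝ, ContDiff ℝ 2 f →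
      ∫ z, ((B * b₁ * (1 - z) - B * b₀ * z + S * z * (1 - z)) * deriv f z
          + 1 / 2 * (z * (1 - z)) * deriv (deriv f) z) ∂μ = 0)
    (n : ℕ) :
    ((n : ℝ) + 1 + 2 * B + 2 * S) * ∫ z, (1 - z) ^ (n + 2) ∂μ
      = ((n : ℝ) + 1 + 2 * B * b₀) * ∫ z, (1 - z) ^ (n + 1) ∂μ
        + 2 * S * ∫ z, (1 - z) ^ (n + 3) ∂μ := by
  have hint (k : ℕ) : Integrable (fun z : ℝ => (1 - z) ^ k) μ :=
    (continuous_const.sub continuous_id).pow k |>.continuousOn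
      |>.integrable_of_measure_compl_eq_zero isCompact_Icc hsupp
  have hzero : ∫ z, wfGenerator B b₀ b₁ S (fun z => (1 - z) ^ (n + 2)) z ∂μ = 0 :=
    hstat _ ((contDiff_const.sub contDiff_id).pow (n + 2))
  simp_rw [wfGenerator_one_sub_pow hsum] at hzero
  rw [integral_const_mul, integral_sub (((hint _).const_mul _).fun_add ((hint _).const_mul _))
    ((hint _).const_mul _), integral_add ((hint _).const_mul _) ((hint _).const_mul _),
    integral_const_mul, integral_const_mul, integral_const_mul] at hzero
  have hn : ((n : ℝ) + 2) / 2 ≠ 0 := by positivity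
  linarith [(mul_eq_zero.1 hzero).resolve_left hn]

/-- First moment recursion for a stationary distribution of the Wright-Fisher
diffusion with mutation rates `B*b₀`, `B*b₁` and selection coefficient `S`:
`(n+1+2B+2S)·E[0^{n+2}] = (n+1+2Bb₀)·E[0^{n+1}] + 2S·E[0^{n+3}]`. -/
theorem WF_moment_recursion_one (B b₀ b₁ S : ℝ) (hB : 0 ≤ B) (hS : 0 ≤ S)
    (hb₀ : 0 ≤ b₀) (hb₁ : 0 ≤ b₁) (hsum : b₀ + b₁ = 1)
    (μ : Measure ℝ) [IsProbabilityMeasure μ] (hsupp : μ (Set.Icc (0 : ℝ) 1)ᶜ = 0)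
    (hstat : ∀ f : ℝ → ℝ, ContDiff ℝ 2 f →
      ∫ z, ((B * b₁ * (1 - z) - B * b₀ * z + S * z * (1 - z)) * deriv f z
          + 1 / 2 * (z * (1 - z)) * deriv (deriv f) z) ∂μ = 0)
    (n : ℕ) :
    ((n : ℝ) + 1 + 2 * B + 2 * S) * ∫ z, (1 - z) ^ (n + 2) ∂μ
      = ((n : ℝ) + 1 + 2 * B * b₀) * ∫ z, (1 - z) ^ (n + 1) ∂μ
        + 2 * S * ∫ z, (1 - z) ^ (n + 3) ∂μ :=
  WF_moment_recursion_one_general B b₀ b₁ S hsum μ hsupp hstat n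
end
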